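/- Let φ ∈ L²(ℝ), let c : ℤ → ℂ be finitely supported, and define χ := Σ_{l∈ℤ} c_l φ_{1l}. Then for every γ ∈ L²(ℝ) and all j, k ∈ ℤ, ⟨γ, χ_{jk}⟩ = Σ_{l∈ℤ} conj(c_l) · ⟨γ, φ_{j+1, 2k+l}⟩, where χ_{jk}(x) := 2^{j/2} χ(2^j x − k). In particular, writing a_{jk}(γ) := ⟨γ, φ_{jk}⟩ for the approximation coefficients: if φ satisfies the scaling equation φ = Σ_l h_l φ_{1l}, then a_{jk}(γ) = Σ_l conj(h_l) a_{j+1, 2k+l}(γ), i.e., a_j(γ) = M⁻ C_{h̃} a_{j+1}(γ); and if ψ := Σ_l g_l φ_{1l}, then d_{jk}(γ) := ⟨γ, ψ_{jk}⟩ = Σ_l conj(g_l) a_{j+1, 2k+l}(γ), i.e., d_j(γ) = M⁻ C_{g̃} a_{j+1}(γ). This is the decomposition step of the Pyramid Algorithm. -/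

import Mathlib

open MeasureTheory

/-!
Substituting `y = 2^j x - k` into the refinement relation `χ = Σ_l c_l φ_{1l}` gives the
pointwise identity `χ_{jk} = Σ_l c_l φ_{j+1, 2k+l}`, a finite sum of `L²` functions. The inner
product with `γ` is conjugate-linear in its second slot, so it distributes over this finite sum.
-/

/-- For `f : ℝ → ℂ`, `f_{jk}(x) := 2^{j/2} f(2^j x − k)` (translation–dilation). -/
noncomputable def dil (f : ℝ → ℂ) (j k : ℤ) (x : ℝ) : ℂ :=
  (((2:ℝ) ^ ((j:ℝ) / 2) : ℝ) : ℂ) * f ((2:ℝ) ^ j * x - (k:ℝ))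

section Lp

variable {E : Type*} [NormedAddCommGroup E] {p : ENNReal} {f : ℝ → E}

theorem MeasureTheory.MemLp.comp_mul_left (hf : MemLp f p volume) {a : ℝ} (ha : a ≠ 0) :
    MemLp (fun x => f (a * x)) p volume :=
  MemLp.comp_of_map (f := fun x => a * x)
    (by rw [Real.map_volume_mul_left ha]; exact hf.smul_measure ENNReal.ofReal_ne_top)
    (by fun_prop)

theorem MeasureTheory.MemLp.comp_mul_left_sub (hf : MemLp f p volume) {a : ℝ} (ha : a ≠ 0)
    (b : ℝ) :
    MemLp (fun x => f (a * x - b)) p volume :=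
  (hf.comp_measurePreserving (measurePreserving_sub_right volume b)).comp_mul_left ha

end Lp

theorem MeasureTheory.MemLp.dil {f : ℝ → ℂ} {p : ENNReal} (hf : MemLp f p volume)
    (j k : ℤ) :
    MemLp (dil f j k) p volume :=
  (hf.comp_mul_left_sub (zpow_ne_zero j two_ne_zero) k).const_mul _

theorem dil_dil (f : ℝ → ℂ) (i : ℕ) (l j k : ℤ) :
    dil (dil f i l) j k = dil f (i + j) (2 ^ i * k + l) := by
  funext x
  have hscale : (2 : ℝ) ^ ((j : ℝ) / 2) * 2 ^ (((i : ℤ) : ℝ) / 2)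
      = 2 ^ (((i + j : ℤ) : ℝ) / 2) := by
    rw [← Real.rpow_add two_pos]
    push_cast
    ring_nf
  have harg : (2 : ℝ) ^ (i : ℤ) * (2 ^ j * x - k) - l
      = 2 ^ ((i : ℤ) + j) * x - ((2 ^ i * k + l : ℤ) : ℝ) := by
    rw [zpow_add₀ two_ne_zero, zpow_natCast]
    push_cast
    ring
  simp only [dil, harg, ← hscale, Complex.ofReal_mul]
  ring

theorem dil_finset_sum {ι : Type*} (s : Finset ι) (c : ι → ℂ) (f : ι → ℝ → ℂ) (j k : ℤ) :
    dil (fun x => ∑ l ∈ s, c l * f l x) j k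
      = fun x => ∑ l ∈ s, c l * dil (f l) j k x := by
  funext x
  simp only [dil, Finset.mul_sum]
  exact Finset.sum_congr rfl fun l _ => by ring

theorem integral_mul_conj_finset_sum {α ι : Type*} [MeasurableSpace α] {μ : Measure α}
    (s : Finset ι) (c : ι → ℂ) {γ : α → ℂ} {g : ι → α → ℂ} (hγ : MemLp γ 2 μ)
    (hg : ∀ l ∈ s, MemLp (g l) 2 μ) :
    ∫ t, γ t * starRingEnd ℂ (∑ l ∈ s, c l * g l t) ∂μ
      = ∑ l ∈ s, starRingEnd ℂ (c l) * ∫ t, γ t * starRingEnd ℂ (g l t) ∂μ := by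
  have hint : ∀ l ∈ s, Integrable (fun t => γ t * starRingEnd ℂ (g l t)) μ :=
    fun l hl => hγ.integrable_mul (hg l hl).star
  simp only [map_sum, map_mul, Finset.mul_sum, mul_left_comm (γ _)]
  rw [integral_finsetSum _ fun l hl => (hint l hl).const_mul _]
  exact Finset.sum_congr rfl fun l _ => integral_const_mul _ _

/-- decomposition step of the Pyramid Algorithm: for `φ ∈ L²(ℝ)`,
finitely supported `c : ℤ → ℂ` and `χ := Σ_l c_l φ_{1l}`, for every `γ ∈ L²(ℝ)` and
all `j, k`, one has `⟨γ, χ_{jk}⟩ = Σ_l conj(c_l) ⟨γ, φ_{j+1, 2k+l}⟩` (with the inner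
product `⟨u, v⟩ = ∫ u conj(v)`). -/
theorem stmt7 (φ : ℝ → ℂ) (hφ : MemLp φ 2 (volume : Measure ℝ))
    (c : ℤ → ℂ) (hc : (Function.support c).Finite)
    (χ : ℝ → ℂ) (hχ : ∀ x : ℝ, χ x = ∑ᶠ l : ℤ, c l * dil φ 1 l x)
    (γ : ℝ → ℂ) (hγ : MemLp γ 2 (volume : Measure ℝ)) (j k : ℤ) :
    (∫ t : ℝ, γ t * (starRingEnd ℂ) (dil χ j k t))
      = ∑ᶠ l : ℤ, (starRingEnd ℂ) (c l) *
          ∫ t : ℝ, γ t * (starRingEnd ℂ) (dil φ (j + 1) (2 * k + l) t) := by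
  set s := hc.toFinset
  have hsupp {F : ℤ → ℂ} : Function.support (fun l => c l * F l) ⊆ s :=
    fun l hl => by contrapose! hl; simp_all [s]
  have hstarsupp {F : ℤ → ℂ} :
      Function.support (fun l => starRingEnd ℂ (c l) * F l) ⊆ s :=
    fun l hl => by contrapose! hl; simp_all [s]
  have hχs : χ = fun x => ∑ l ∈ s, c l * dil φ 1 l x :=
    funext fun x => (hχ x).trans (finsum_eq_sum_of_support_subset _ hsupp)
  have hdil : dil χ j k = fun t => ∑ l ∈ s, c l * dil φ (j + 1) (2 * k + l) t := by
    have hφ1 (l : ℤ) : dil (dil φ 1 l) j k = dil φ (j + 1) (2 * k + l) := by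
      simpa [add_comm] using dil_dil φ 1 l j k
    simp only [hχs, dil_finset_sum, hφ1]
  rw [hdil, integral_mul_conj_finset_sum s c hγ fun l _ => hφ.dil _ _,
    finsum_eq_sum_of_support_subset _ hstarsupp]
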